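/- For every integer n ≥ 2, the number b_B(n) satisfies 0 < b_B(n) < 1, and for every real t with 0 < t ≤ 1 one has scal_B(n,t)/(2n²−1) < n/(2n−1) if and only if b_B(n) < t. (Consequently the canonical variation h_t on SO(2n+1)/Tⁿ is locally rigid on the interval (b_B(n), 1].) -/
import Mathlib


/-- Scalar curvature of the canonical variation `h_t` of the normal homogeneous
metric on the full flag manifold `SO(2n+1)/Tⁿ`. -/
noncomputable def scalB (n : ℕ) (t : ℝ) : ℝ :=
  (5 * n ^ 3 - 2 * n ^ 2 * t ^ 4 + 8 * n ^ 2 * t ^ 2 - 7 * n ^ 2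
    + 2 * n * t ^ 4 - 4 * n * t ^ 2 + 2 * n) / (4 * (2 * n - 1) * t ^ 2)

/-- The first degeneracy instant of `h_t` on `SO(2n+1)/Tⁿ`. -/
noncomputable def bB (n : ℕ) : ℝ :=
  Real.sqrt (Real.sqrt ((8 * n ^ 2 + 5 * n - 2) / 2) - 2 * n)

set_option maxHeartbeats 1000000 in
/-- `0 < b_B(n) < 1`, and for `0 < t ≤ 1` one has
`scal_B(n,t)/(2n²-1) < n/(2n-1)` iff `b_B(n) < t`; hence `h_t` is locally rigid
on `(b_B(n), 1]`.  Here `n/(2n-1)` is the first positive eigenvalue of the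
Laplacian of the base sphere `S²ⁿ`. -/
theorem bB_mem_Ioo_and_scalB_lt_iff (n : ℕ) (hn : 2 ≤ n) :
    (0 < bB n ∧ bB n < 1) ∧
    ∀ t : ℝ, 0 < t → t ≤ 1 →
      (scalB n t / (2 * n ^ 2 - 1) < n / (2 * n - 1) ↔ bB n < t) := by
  have hn2 : (2:ℝ) ≤ (n:ℝ) := by exact_mod_cast hn
  have harg : (0:ℝ) ≤ (8 * (n:ℝ) ^ 2 + 5 * (n:ℝ) - 2) / 2 := by nlinarith
  set S : ℝ := Real.sqrt ((8 * (n:ℝ) ^ 2 + 5 * (n:ℝ) - 2) / 2) with hSdef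
  have hS0 : 0 ≤ S := Real.sqrt_nonneg _
  have hS2 : S ^ 2 = (8 * (n:ℝ) ^ 2 + 5 * (n:ℝ) - 2) / 2 := Real.sq_sqrt harg
  have hSgt : 2 * (n:ℝ) < S := by nlinarith [hS2, hS0, sq_nonneg (S - 2 * (n:ℝ))]
  have hSlt : S < 2 * (n:ℝ) + 1 := by
    rw [hSdef, Real.sqrt_lt' (by nlinarith)]
    nlinarith
  have hbB : bB n = Real.sqrt (S - 2 * (n:ℝ)) := rfl
  have hupos : 0 < S - 2 * (n:ℝ) := by linarith
  have hbBpos : 0 < bB n := by rw [hbB]; exact Real.sqrt_pos.mpr hupos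
  have hbBlt : bB n < 1 := by rw [hbB, Real.sqrt_lt' one_pos]; nlinarith
  refine ⟨⟨hbBpos, hbBlt⟩, ?_⟩
  intro t ht ht1
  have ht2 : (0:ℝ) < t ^ 2 := by positivity
  have hq2 : (0:ℝ) < 2 * (n:ℝ) - 1 := by linarith
  have hq : (0:ℝ) < 2 * (n:ℝ) ^ 2 - 1 := by nlinarith
  have hden : (0:ℝ) < 4 * (2 * (n:ℝ) - 1) * t ^ 2 * (2 * (n:ℝ) ^ 2 - 1) := by positivity
  have hcoef : (0:ℝ) < (2 * (n:ℝ) - 1) * (n:ℝ) * ((n:ℝ) - 1) := by nlinarith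
  have hfac : (0:ℝ) < t ^ 2 + 2 * (n:ℝ) + S := by nlinarith
  have hid : (n:ℝ) * (4 * (2 * (n:ℝ) - 1) * t ^ 2 * (2 * (n:ℝ) ^ 2 - 1))
      - (5 * (n:ℝ) ^ 3 - 2 * (n:ℝ) ^ 2 * t ^ 4 + 8 * (n:ℝ) ^ 2 * t ^ 2 - 7 * (n:ℝ) ^ 2
        + 2 * (n:ℝ) * t ^ 4 - 4 * (n:ℝ) * t ^ 2 + 2 * (n:ℝ)) * (2 * (n:ℝ) - 1)
      = (2 * (n:ℝ) - 1) * (n:ℝ) * ((n:ℝ) - 1)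
        * (2 * t ^ 4 + 8 * (n:ℝ) * t ^ 2 - 5 * (n:ℝ) + 2) := by ring
  rw [hbB, Real.sqrt_lt' ht, scalB, div_div, div_lt_div_iff₀ hden hq2]
  constructor
  · intro h
    by_contra hc
    push_neg at hc
    have h1 : 0 ≤ (S - 2 * (n:ℝ) - t ^ 2) * (t ^ 2 + 2 * (n:ℝ) + S) :=
      mul_nonneg (by linarith) hfac.le
    have hbr : 2 * t ^ 4 + 8 * (n:ℝ) * t ^ 2 - 5 * (n:ℝ) + 2 ≤ 0 := by nlinarith [h1, hS2]
    have h2 : 0 ≤ (2 * (n:ℝ) - 1) * (n:ℝ) * ((n:ℝ) - 1)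
        * (-(2 * t ^ 4 + 8 * (n:ℝ) * t ^ 2 - 5 * (n:ℝ) + 2)) :=
      mul_nonneg hcoef.le (by linarith)
    linarith [h, hid, h2]
  · intro h
    have h1 : 0 < (t ^ 2 - (S - 2 * (n:ℝ))) * (t ^ 2 + 2 * (n:ℝ) + S) :=
      mul_pos (by linarith) hfac
    have hbr : 0 < 2 * t ^ 4 + 8 * (n:ℝ) * t ^ 2 - 5 * (n:ℝ) + 2 := by nlinarith [h1, hS2]
    have h2 : 0 < (2 * (n:ℝ) - 1) * (n:ℝ) * ((n:ℝ) - 1)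
        * (2 * t ^ 4 + 8 * (n:ℝ) * t ^ 2 - 5 * (n:ℝ) + 2) := mul_pos hcoef hbr
    linarith [hid, h2]
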